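/- Uniqueness of the Shapley value: any attribution operator φ mapping games v on a finite player set P to vectors in ℝ^P satisfying efficiency, null player, symmetry, and linearity coincides with the Shapley value on every game. -/

import Mathlib

/-!
The Shapley value itself satisfies the four axioms. Linearity and the null-player property are
immediate; for symmetry, split the coalitions avoiding `i` according to whether they contain `j`;
efficiency is checked on the point games `Pi.single R 1`, where it reduces to the weight identity
`r w(r - 1) - (n - r) w(r) = [r = n] - [r = 0]`.

Conversely, the axioms determine an operator on each unanimity game `u_T = [T ⊆ ·]`: players
outside `T` are null, players in `T` are symmetric, and efficiency gives each of them `1 / |T|`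
(for `T = ∅` every player is null). Null player plus linearity make the operator see only the
values of a game on subsets of `P`, and there, by Möbius inversion, the game is `∑ T, d_T u_T` with
the Harsanyi dividends `d_T`. So by linearity any two operators satisfying the axioms agree.
-/

open Finset

/-- The Shapley value of player `i` in the cooperative game with player set `P`
and characteristic function `v`. -/
noncomputable def shapley {ι : Type*} [DecidableEq ι] (P : Finset ι)
    (v : Finset ι → ℝ) (i : ι) : ℝ :=
  ∑ S ∈ (P.erase i).powerset,
    ((Nat.factorial S.card * Nat.factorial (P.card - S.card - 1) : ℝ) /
        (Nat.factorial P.card : ℝ)) * (v (insert i S) - v S)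

theorem IsLinearMap.of_map_smul_add_smul {R M N : Type*} [Semiring R] [AddCommMonoid M]
    [Module R M] [AddCommMonoid N] [Module R N] {f : M → N}
    (h : ∀ (a b : R) (x y : M), f (a • x + b • y) = a • f x + b • f y) : IsLinearMap R f :=
  ⟨fun x y => by simpa using h 1 1 x y, fun a x => by simpa using h a 0 x x⟩

theorem IsLinearMap.map_sum_smul {R M N α : Type*} [Semiring R] [AddCommMonoid M]
    [Module R M] [AddCommMonoid N] [Module R N] {f : M → N} (hf : IsLinearMap R f)
    (s : Finset α) (c : α → R) (g : α → M) :
    f (∑ a ∈ s, c a • g a) = ∑ a ∈ s, c a • f (g a) := by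
  simpa only [IsLinearMap.mk'_apply, hf.map_smul] using
    map_sum (IsLinearMap.mk' f hf) (fun a => c a • g a) s

section Harsanyi

variable {ι M : Type*} [DecidableEq ι] [AddCommGroup M]

def harsanyiDividend (v : Finset ι → M) (T : Finset ι) : M :=
  ∑ R ∈ T.powerset, (-1 : ℤ) ^ #(T \ R) • v R

theorem harsanyiDividend_insert {a : ι} {T : Finset ι} (ha : a ∉ T) (v : Finset ι → M) :
    harsanyiDividend v (insert a T) =
      harsanyiDividend (fun S => v (insert a S)) T - harsanyiDividend v T := by
  rw [harsanyiDividend, sum_powerset_insert ha, sub_eq_neg_add, harsanyiDividend,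
    harsanyiDividend, ← sum_neg_distrib]
  congr 1 <;> refine sum_congr rfl fun R hR => ?_
  · have haR : a ∉ R := fun h => ha (mem_powerset.1 hR h)
    rw [insert_sdiff_of_notMem _ haR, card_insert_of_notMem (by simp [ha]), pow_succ,
      mul_neg_one, neg_smul]
  · rw [insert_sdiff_insert, sdiff_insert_of_notMem ha]

theorem sum_powerset_harsanyiDividend (v : Finset ι → M) (S : Finset ι) :
    ∑ T ∈ S.powerset, harsanyiDividend v T = v S := by
  induction S using Finset.induction_on generalizing v with
  | empty => simp [harsanyiDividend]
  | insert a S ha ih =>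
    have hT : ∀ T ∈ S.powerset, a ∉ T := fun T hT h => ha (mem_powerset.1 hT h)
    rw [sum_powerset_insert ha, sum_congr rfl fun T h => harsanyiDividend_insert (hT T h) v,
      sum_sub_distrib, ih, ih]
    abel

end Harsanyi

section Games

variable {ι : Type*} [DecidableEq ι]

def unanimityGame (T S : Finset ι) : ℝ := if T ⊆ S then 1 else 0

theorem sum_harsanyiDividend_smul_unanimityGame {P S : Finset ι} (hS : S ⊆ P)
    (v : Finset ι → ℝ) :
    (∑ T ∈ P.powerset, harsanyiDividend v T • unanimityGame T) S = v S := by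
  simp only [Finset.sum_apply, Pi.smul_apply, unanimityGame, smul_eq_mul, mul_ite, mul_one,
    mul_zero]
  rw [← sum_filter, ← sum_powerset_harsanyiDividend v S]
  congr 1
  ext T
  simp only [mem_filter, mem_powerset]
  exact ⟨fun h => h.2, fun h => ⟨h.trans hS, h⟩⟩

def IsNullPlayer (P : Finset ι) (v : Finset ι → ℝ) (i : ι) : Prop :=
  ∀ S ⊆ P.erase i, v (insert i S) = v S

def AreSymmetricPlayers (P : Finset ι) (v : Finset ι → ℝ) (i j : ι) : Prop :=
  ∀ S ⊆ (P.erase i).erase j, v (insert i S) = v (insert j S)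

structure SatisfiesShapleyAxioms (P : Finset ι) (φ : (Finset ι → ℝ) → ι → ℝ) : Prop where
  efficient : ∀ v : Finset ι → ℝ, v ∅ = 0 → ∑ i ∈ P, φ v i = v P
  null_player : ∀ v i, i ∈ P → IsNullPlayer P v i → φ v i = 0
  symmetric : ∀ v i j, i ∈ P → j ∈ P → i ≠ j → AreSymmetricPlayers P v i j → φ v i = φ v j
  isLinearMap : IsLinearMap ℝ φ

theorem isNullPlayer_unanimityGame {P T : Finset ι} {i : ι} (hi : i ∉ T) :
    IsNullPlayer P (unanimityGame T) i := by
  intro S _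
  simp only [unanimityGame, subset_insert_iff_of_notMem hi]

theorem areSymmetricPlayers_unanimityGame {P T : Finset ι} {i j : ι} (hi : i ∈ T) (hj : j ∈ T)
    (hij : i ≠ j) : AreSymmetricPlayers P (unanimityGame T) i j := by
  intro S hS
  have hiS : i ∉ S := fun h => by simpa using hS h
  have hjS : j ∉ S := fun h => by simpa using hS h
  have hiS' : ¬T ⊆ insert j S := fun h => by simpa [hij, hiS] using h hi
  have hjS' : ¬T ⊆ insert i S := fun h => by simpa [hij.symm, hjS] using h hj
  simp only [unanimityGame, if_neg hiS', if_neg hjS']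

namespace SatisfiesShapleyAxioms

variable {P : Finset ι} {φ : (Finset ι → ℝ) → ι → ℝ}

theorem apply_congr (hφ : SatisfiesShapleyAxioms P φ) {v w : Finset ι → ℝ}
    (h : ∀ S ⊆ P, v S = w S) {i : ι} (hi : i ∈ P) : φ v i = φ w i := by
  have hnull : IsNullPlayer P (v - w) i := fun S hS => by
    have hSP : S ⊆ P := hS.trans (erase_subset i P)
    simp [h S hSP, h _ (insert_subset hi hSP)]
  simpa [hφ.isLinearMap.map_sub, sub_eq_zero] using hφ.null_player _ i hi hnull

theorem apply_unanimityGame (hφ : SatisfiesShapleyAxioms P φ) {T : Finset ι} (hT : T ⊆ P)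
    {i : ι} (hi : i ∈ P) :
    φ (unanimityGame T) i = if i ∈ T then (#T : ℝ)⁻¹ else 0 := by
  split_ifs with hiT
  case neg => exact hφ.null_player _ i hi (isNullPlayer_unanimityGame hiT)
  have hconst : ∀ j ∈ T, φ (unanimityGame T) j = φ (unanimityGame T) i := fun j hj => by
    rcases eq_or_ne j i with rfl | hji
    · rfl
    · exact hφ.symmetric _ j i (hT hj) hi hji (areSymmetricPlayers_unanimityGame hj hiT hji)
  have hsum : ∑ j ∈ P, φ (unanimityGame T) j = #T * φ (unanimityGame T) i := by
    rw [← sum_subset hT fun j hj hjT =>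
      hφ.null_player _ j hj (isNullPlayer_unanimityGame hjT), sum_congr rfl hconst, sum_const,
      nsmul_eq_mul]
  have hone : ∑ j ∈ P, φ (unanimityGame T) j = 1 := by
    rw [hφ.efficient _ (if_neg (fun h => by simpa using h hiT)), unanimityGame, if_pos hT]
  exact eq_inv_of_mul_eq_one_left (by rw [mul_comm, ← hsum, hone])

theorem apply_eq {ψ : (Finset ι → ℝ) → ι → ℝ} (hφ : SatisfiesShapleyAxioms P φ)
    (hψ : SatisfiesShapleyAxioms P ψ) (v : Finset ι → ℝ) {i : ι} (hi : i ∈ P) :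
    φ v i = ψ v i := by
  have hv : ∀ S ⊆ P, v S = (∑ T ∈ P.powerset, harsanyiDividend v T • unanimityGame T) S :=
    fun S hS => (sum_harsanyiDividend_smul_unanimityGame hS v).symm
  rw [hφ.apply_congr hv hi, hψ.apply_congr hv hi, hφ.isLinearMap.map_sum_smul,
    hψ.isLinearMap.map_sum_smul]
  simp only [Finset.sum_apply, Pi.smul_apply]
  refine sum_congr rfl fun T hT => ?_
  rw [hφ.apply_unanimityGame (mem_powerset.1 hT) hi, hψ.apply_unanimityGame (mem_powerset.1 hT) hi]

end SatisfiesShapleyAxioms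

open scoped Nat

noncomputable def shapleyWeight (n s : ℕ) : ℝ := (s ! * (n - s - 1)! : ℝ) / n !

theorem mul_shapleyWeight_pred_sub_mul_shapleyWeight (n r : ℕ) (hr : r ≤ n) :
    r * shapleyWeight n (r - 1) - (n - r : ℕ) * shapleyWeight n r =
      (if r = n then 1 else 0) - (if r = 0 then 1 else 0) := by
  obtain ⟨m, rfl⟩ := Nat.exists_eq_add_of_le hr
  rcases r with _ | r <;> rcases m with _ | m
  · simp
  · simp [shapleyWeight, Nat.factorial_succ]
    field_simp
  · simp [shapleyWeight, Nat.factorial_succ]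
    field_simp
  · simp [shapleyWeight, Nat.factorial_succ, show r + 1 + (m + 1) - r - 1 = m + 1 by omega]
    ring

theorem shapley_eq_sum_shapleyWeight (P : Finset ι) (v : Finset ι → ℝ) (i : ι) :
    shapley P v i =
      ∑ S ∈ (P.erase i).powerset, shapleyWeight #P #S * (v (insert i S) - v S) :=
  rfl

theorem isLinearMap_shapley (P : Finset ι) : IsLinearMap ℝ (shapley P) := by
  constructor <;> intros <;> funext i <;>
    simp only [shapley, Pi.add_apply, Pi.smul_apply, smul_eq_mul, mul_sum, ← sum_add_distrib] <;>
    exact sum_congr rfl fun _ _ => by ring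

theorem shapley_congr {P : Finset ι} {v w : Finset ι → ℝ} (h : ∀ S ⊆ P, v S = w S) {i : ι}
    (hi : i ∈ P) : shapley P v i = shapley P w i := by
  refine sum_congr rfl fun S hS => ?_
  have hSP : S ⊆ P := (mem_powerset.1 hS).trans (erase_subset i P)
  rw [h S hSP, h _ (insert_subset hi hSP)]

theorem shapley_eq_zero_of_isNullPlayer {P : Finset ι} {v : Finset ι → ℝ} {i : ι}
    (h : IsNullPlayer P v i) : shapley P v i = 0 :=
  sum_eq_zero fun S hS => by rw [h S (mem_powerset.1 hS), sub_self, mul_zero]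

theorem shapley_eq_of_areSymmetricPlayers {P : Finset ι} {v : Finset ι → ℝ} {i j : ι}
    (hi : i ∈ P) (hj : j ∈ P) (hij : i ≠ j) (h : AreSymmetricPlayers P v i j) :
    shapley P v i = shapley P v j := by
  set Q := (P.erase i).erase j
  have hiQ : i ∉ Q := by simp [Q]
  have hjQ : j ∉ Q := by simp [Q]
  have hPi : P.erase i = insert j Q := (insert_erase (mem_erase.2 ⟨hij.symm, hj⟩)).symm
  have hPj : P.erase j = insert i Q := by
    rw [show Q = (P.erase j).erase i from erase_right_comm, insert_erase (mem_erase.2 ⟨hij, hi⟩)]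
  simp only [shapley_eq_sum_shapleyWeight, hPi, hPj, sum_powerset_insert hiQ,
    sum_powerset_insert hjQ]
  congr 1 <;> refine sum_congr rfl fun S hS => ?_
  · rw [h S (mem_powerset.1 hS)]
  · have hiS : i ∉ S := fun h => hiQ (mem_powerset.1 hS h)
    have hjS : j ∉ S := fun h => hjQ (mem_powerset.1 hS h)
    rw [h S (mem_powerset.1 hS), card_insert_of_notMem hiS, card_insert_of_notMem hjS,
      insert_comm]

theorem shapley_single {P R : Finset ι} (hR : R ⊆ P) (i : ι) :
    shapley P (Pi.single R 1) i =
      if i ∈ R then shapleyWeight #P (#R - 1) else -shapleyWeight #P #R := by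
  have hins : ∀ S ∈ (P.erase i).powerset, insert i S = R ↔ i ∈ R ∧ S = R.erase i := by
    intro S hS
    have hiS : i ∉ S := fun h => by simpa using mem_powerset.1 hS h
    constructor
    · rintro rfl
      simp [hiS]
    · rintro ⟨hiR, rfl⟩
      exact insert_erase hiR
  have hRsub : R ⊆ P.erase i ↔ i ∉ R := by rw [subset_erase, and_iff_right hR]
  simp only [shapley_eq_sum_shapleyWeight, Pi.single_apply, mul_sub, mul_ite, mul_one, mul_zero,
    sum_sub_distrib]
  rw [sum_congr rfl fun S hS => if_congr (hins S hS) rfl rfl]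
  split_ifs with hiR
  · simp [hiR, hRsub, erase_subset_erase i hR]
  · simp [hiR, hRsub]

theorem sum_shapley_single {P R : Finset ι} (hR : R ⊆ P) :
    ∑ i ∈ P, shapley P (Pi.single R 1) i = (if R = P then 1 else 0) - (if R = ∅ then 1 else 0) := by
  simp only [shapley_single hR, sum_ite, filter_mem_eq_inter, inter_eq_right.2 hR,
    filter_notMem_eq_sdiff, sum_const, nsmul_eq_mul, card_sdiff_of_subset hR, mul_neg,
    ← sub_eq_add_neg]
  have hRP : #R = #P ↔ R = P := ⟨fun h => eq_of_subset_of_card_le hR h.ge, fun h => h ▸ rfl⟩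
  rw [mul_shapleyWeight_pred_sub_mul_shapleyWeight _ _ (card_le_card hR)]
  simp only [hRP, card_eq_zero]

theorem shapley_efficient (P : Finset ι) {v : Finset ι → ℝ} (hv₀ : v ∅ = 0) :
    ∑ i ∈ P, shapley P v i = v P := by
  have hv : ∀ S ⊆ P, v S = (∑ R ∈ P.powerset, v R • Pi.single R 1) S := by
    intro S hS
    simp [Finset.sum_apply, Pi.single_apply, hS]
  calc ∑ i ∈ P, shapley P v i
      = ∑ i ∈ P, ∑ R ∈ P.powerset, v R * shapley P (Pi.single R 1) i := by
        refine sum_congr rfl fun i hi => ?_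
        rw [shapley_congr hv hi, (isLinearMap_shapley P).map_sum_smul]
        simp
    _ = ∑ R ∈ P.powerset, v R * ((if R = P then 1 else 0) - (if R = ∅ then 1 else 0)) := by
        rw [sum_comm]
        refine sum_congr rfl fun R hR => ?_
        rw [← mul_sum, sum_shapley_single (mem_powerset.1 hR)]
    _ = v P := by simp [mul_sub, sum_sub_distrib, hv₀]

theorem satisfiesShapleyAxioms_shapley {P : Finset ι} : SatisfiesShapleyAxioms P (shapley P) where
  efficient _ := shapley_efficient P
  null_player _ _ _ := shapley_eq_zero_of_isNullPlayer
  symmetric _ _ _ hi hj hij := shapley_eq_of_areSymmetricPlayers hi hj hij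
  isLinearMap := isLinearMap_shapley P

end Games

/-- Uniqueness of the Shapley value: any attribution operator satisfying
efficiency, null player, symmetry and linearity coincides with the Shapley
value on every game with `v ∅ = 0`. -/
theorem shapley_unique {ι : Type*} [DecidableEq ι] (P : Finset ι)
    (φ : (Finset ι → ℝ) → ι → ℝ)
    (heff : ∀ v : Finset ι → ℝ, v ∅ = 0 → ∑ i ∈ P, φ v i = v P)
    (hnull : ∀ (v : Finset ι → ℝ) (i : ι), i ∈ P →
      (∀ S ⊆ P.erase i, v (insert i S) = v S) → φ v i = 0)
    (hsym : ∀ (v : Finset ι → ℝ) (i j : ι), i ∈ P → j ∈ P → i ≠ j →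
      (∀ S ⊆ (P.erase i).erase j, v (insert i S) = v (insert j S)) →
      φ v i = φ v j)
    (hlin : ∀ (a b : ℝ) (v w : Finset ι → ℝ),
      φ (fun S => a * v S + b * w S) = fun i => a * φ v i + b * φ w i) :
    ∀ v : Finset ι → ℝ, v ∅ = 0 → ∀ i ∈ P, φ v i = shapley P v i := by
  intro v _ i hi
  exact SatisfiesShapleyAxioms.apply_eq ⟨heff, hnull, hsym, .of_map_smul_add_smul hlin⟩
    satisfiesShapleyAxioms_shapley v hi
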